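/- If a sequence of events (e_i) admits a witnessing sequence of set states (D_i) for the state-based specification (D_0 = ∅ and each triple (D_i, e_i, D_{i+1}) complies with the transition table), then there exists a function γ on the Op¹ events satisfying FS1 and FS2. -/

import Mathlib

/-- Event type: Add, Rem, or Contains. -/
inductive EType | add | rem | cnt
deriving DecidableEq

/-- Status of an event: 0, 1, or f (failed). -/
inductive Status | s0 | s1 | sf
deriving DecidableEq

open EType Status

/-!
Take γ(a) to be the most recent Add⁰ event of key `kval a` before `a`. A key lies in the state
`D i` only if it was added by an Add⁰ event before `i` and stayed in the set ever since, since
only an Add⁰ event can put a key back. This gives FS1: a Rem¹ event of that key in between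
would have removed it. For FS2, the key added at `a` is absent at `b`, so it leaves the set at
some first step `r`, which has to be a Rem¹ event of that key; no Add⁰ event of the key occurs
between `a` and `r`, because the key is present there, so γ(r) = a.
-/

namespace Nat

variable {p : ℕ → Prop} [DecidablePred p] {a i j : ℕ}

theorem findGreatest_pred_lt_and (h : ∃ j < i, p j) :
    findGreatest p (i - 1) < i ∧ p (findGreatest p (i - 1)) := by
  obtain ⟨j, hji, hj⟩ := h
  exact ⟨(findGreatest_le _).trans_lt (by omega), findGreatest_spec (m := j) (by omega) hj⟩

theorem not_of_findGreatest_pred_lt (hj : findGreatest p (i - 1) < j) (hji : j < i) : ¬p j :=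
  findGreatest_is_greatest hj (by omega)

theorem findGreatest_pred_eq (ha : p a) (hai : a < i) (h : ∀ j, a < j → j < i → ¬p j) :
    findGreatest p (i - 1) = a :=
  findGreatest_eq_iff.2 ⟨by omega, fun _ => ha, fun j h₁ h₂ => h j h₁ (by omega)⟩

theorem exists_first_not_of_not {q : ℕ → Prop} {b : ℕ} (ha : q a) (hb : ¬q b) (hab : a ≤ b) :
    ∃ r, a ≤ r ∧ r < b ∧ (∀ j, a ≤ j → j ≤ r → q j) ∧ ¬q (r + 1) := by
  classical
  have hex : ∃ m, ¬q (a + m) := ⟨b - a, by rwa [Nat.add_sub_cancel' hab]⟩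
  have hm₀ : Nat.find hex ≠ 0 := fun h => Nat.find_spec hex (by rwa [h])
  refine ⟨a + Nat.find hex - 1, by omega, ?_, fun j h₁ h₂ => ?_, ?_⟩
  · have := Nat.find_min' hex (m := b - a) (by rwa [Nat.add_sub_cancel' hab])
    omega
  · simpa [Nat.add_sub_cancel' h₁] using Nat.find_min hex (m := j - a) (by omega)
  · simpa [show a + Nat.find hex - 1 + 1 = a + Nat.find hex by omega] using Nat.find_spec hex

end Nat

def setStep : EType → Status → ℕ → Finset ℕ → Finset ℕ
  | add, s0, k, S => insert k S
  | rem, s1, k, S => S.erase k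
  | _, _, _, S => S

/-- The transition table, split into its effect on the state (`setStep`) and its guards:
status 1 means the key was present before the event, status 0 that it was absent. -/
structure IsSetWitness (typ : ℕ → EType) (kval : ℕ → ℕ) (χ : ℕ → Status)
    (D : ℕ → Finset ℕ) : Prop where
  zero : D 0 = ∅
  succ : ∀ i, D (i + 1) = setStep (typ i) (χ i) (kval i) (D i)
  mem_of_s1 : ∀ i, χ i = s1 → kval i ∈ D i
  notMem_of_s0 : ∀ i, χ i = s0 → kval i ∉ D i

def IsAdd0 (typ : ℕ → EType) (kval : ℕ → ℕ) (χ : ℕ → Status) (k j : ℕ) : Prop :=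
  typ j = add ∧ χ j = s0 ∧ kval j = k

def IsRem1 (typ : ℕ → EType) (kval : ℕ → ℕ) (χ : ℕ → Status) (k j : ℕ) : Prop :=
  typ j = rem ∧ χ j = s1 ∧ kval j = k

instance (typ : ℕ → EType) (kval : ℕ → ℕ) (χ : ℕ → Status) (k : ℕ) :
    DecidablePred (IsAdd0 typ kval χ k) :=
  fun _ => inferInstanceAs (Decidable (_ ∧ _ ∧ _))

/-- The most recent Add⁰ event of key `k` before `i` (a junk value when there is none). -/
def lastAdd0 (typ : ℕ → EType) (kval : ℕ → ℕ) (χ : ℕ → Status) (k i : ℕ) : ℕ :=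
  Nat.findGreatest (IsAdd0 typ kval χ k) (i - 1)

namespace IsSetWitness

variable {typ : ℕ → EType} {kval : ℕ → ℕ} {χ : ℕ → Status} {D : ℕ → Finset ℕ} {a i k r : ℕ}

theorem of_table (hD0 : D 0 = ∅)
    (hf : ∀ i, χ i = sf → D (i + 1) = D i)
    (hAdd0 : ∀ i, typ i = add → χ i = s0 →
      kval i ∉ D i ∧ D (i + 1) = insert (kval i) (D i))
    (hAdd1 : ∀ i, typ i = add → χ i = s1 → kval i ∈ D i ∧ D (i + 1) = D i)
    (hRem0 : ∀ i, typ i = rem → χ i = s0 → kval i ∉ D i ∧ D (i + 1) = D i)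
    (hRem1 : ∀ i, typ i = rem → χ i = s1 →
      kval i ∈ D i ∧ D (i + 1) = (D i).erase (kval i))
    (hCnt0 : ∀ i, typ i = cnt → χ i = s0 → kval i ∉ D i ∧ D (i + 1) = D i)
    (hCnt1 : ∀ i, typ i = cnt → χ i = s1 → kval i ∈ D i ∧ D (i + 1) = D i) :
    IsSetWitness typ kval χ D where
  zero := hD0
  succ i := by
    cases ht : typ i <;> cases hs : χ i
    exacts [(hAdd0 i ht hs).2, (hAdd1 i ht hs).2, hf i hs, (hRem0 i ht hs).2, (hRem1 i ht hs).2,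
      hf i hs, (hCnt0 i ht hs).2, (hCnt1 i ht hs).2, hf i hs]
  mem_of_s1 i hs := by
    cases ht : typ i
    exacts [(hAdd1 i ht hs).1, (hRem1 i ht hs).1, (hCnt1 i ht hs).1]
  notMem_of_s0 i hs := by
    cases ht : typ i
    exacts [(hAdd0 i ht hs).1, (hRem0 i ht hs).1, (hCnt0 i ht hs).1]

theorem mem_succ_iff (w : IsSetWitness typ kval χ D) :
    k ∈ D (i + 1) ↔ IsAdd0 typ kval χ k i ∨ (k ∈ D i ∧ ¬IsRem1 typ kval χ k i) := by
  rw [w.succ, IsAdd0, IsRem1]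
  cases typ i <;> cases χ i <;> simp [setStep, eq_comm, and_comm]

theorem mem_succ_of_isAdd0 (w : IsSetWitness typ kval χ D) (h : IsAdd0 typ kval χ k i) :
    k ∈ D (i + 1) :=
  w.mem_succ_iff.2 (Or.inl h)

theorem notMem_of_isAdd0 (w : IsSetWitness typ kval χ D) (h : IsAdd0 typ kval χ k i) :
    k ∉ D i :=
  h.2.2 ▸ w.notMem_of_s0 i h.2.1

theorem isRem1_of_mem_of_notMem_succ (w : IsSetWitness typ kval χ D) (h : k ∈ D i)
    (h' : k ∉ D (i + 1)) : IsRem1 typ kval χ k i := by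
  by_contra hr
  exact h' (w.mem_succ_iff.2 (Or.inr ⟨h, hr⟩))

theorem mem_of_mem_of_forall_not_isAdd0 (w : IsSetWitness typ kval χ D) {m : ℕ} (hmi : m ≤ i)
    (hi : k ∈ D i) (h : ∀ j, m ≤ j → j < i → ¬IsAdd0 typ kval χ k j) : k ∈ D m := by
  induction i, hmi using Nat.le_induction with
  | base => exact hi
  | succ i hmi ih =>
    refine ih ?_ fun j h₁ h₂ => h j h₁ (by omega)
    exact (w.mem_succ_iff.1 hi).resolve_left (h i hmi (by omega)) |>.1

theorem exists_isAdd0_of_mem (w : IsSetWitness typ kval χ D) (h : k ∈ D i) :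
    ∃ j < i, IsAdd0 typ kval χ k j := by
  by_contra! hno
  simpa [w.zero] using w.mem_of_mem_of_forall_not_isAdd0 (Nat.zero_le i) h fun j _ => hno j

theorem lastAdd0_lt_and_isAdd0 (w : IsSetWitness typ kval χ D) (h : k ∈ D i) :
    lastAdd0 typ kval χ k i < i ∧ IsAdd0 typ kval χ k (lastAdd0 typ kval χ k i) :=
  Nat.findGreatest_pred_lt_and (w.exists_isAdd0_of_mem h)

theorem mem_of_lastAdd0_lt (w : IsSetWitness typ kval χ D) (h : k ∈ D i) {j : ℕ}
    (h₁ : lastAdd0 typ kval χ k i < j) (h₂ : j ≤ i) : k ∈ D j :=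
  w.mem_of_mem_of_forall_not_isAdd0 h₂ h fun _ hl hli =>
    Nat.not_of_findGreatest_pred_lt (h₁.trans_le hl) hli

theorem lastAdd0_eq_of_mem (w : IsSetWitness typ kval χ D) (ha : IsAdd0 typ kval χ k a)
    (har : a < r) (hmem : ∀ j, a < j → j < r → k ∈ D j) : lastAdd0 typ kval χ k r = a :=
  Nat.findGreatest_pred_eq ha har fun j h₁ h₂ hj => w.notMem_of_isAdd0 hj (hmem j h₁ h₂)

theorem lastAdd0_ne_of_isRem1 (w : IsSetWitness typ kval χ D) (ha : kval a ∈ D a)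
    (hr : typ r = rem) (hrs : χ r = s1) (h₁ : lastAdd0 typ kval χ (kval a) a < r) (h₂ : r < a) :
    lastAdd0 typ kval χ (kval r) r ≠ lastAdd0 typ kval χ (kval a) a := by
  intro heq
  have hkr : kval r = kval a := by
    rw [← (w.lastAdd0_lt_and_isAdd0 (w.mem_of_s1 r hrs)).2.2.2, heq,
      (w.lastAdd0_lt_and_isAdd0 ha).2.2.2]
  have hmem : kval a ∈ D (r + 1) := w.mem_of_lastAdd0_lt ha (by omega) h₂
  rcases w.mem_succ_iff.1 hmem with hadd | ⟨-, hrem⟩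
  · cases hadd.1.symm.trans hr
  · exact hrem ⟨hr, hrs, hkr⟩

theorem exists_isRem1_lastAdd0_eq (w : IsSetWitness typ kval χ D) {b : ℕ} (hab : a < b)
    (ha : IsAdd0 typ kval χ k a) (hb : k ∉ D b) :
    ∃ r, a < r ∧ r < b ∧ IsRem1 typ kval χ k r ∧ lastAdd0 typ kval χ k r = a := by
  obtain ⟨r, har, hrb, hmem, hexit⟩ :=
    Nat.exists_first_not_of_not (q := (k ∈ D ·)) (w.mem_succ_of_isAdd0 ha) hb hab
  refine ⟨r, har, hrb, w.isRem1_of_mem_of_notMem_succ (hmem r har le_rfl) hexit, ?_⟩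
  exact w.lastAdd0_eq_of_mem ha har fun j h₁ h₂ => hmem j h₁ h₂.le

end IsSetWitness

/-- If a sequence of events admits a witnessing sequence of finite
set states (D_i) for the state-based specification (D 0 = ∅ and each triple
(D_i, e_i, D_{i+1}) complies with the transition table), then there exists a
function γ on the Op¹ events satisfying FS1 and FS2. -/
theorem stmt2
    (typ : ℕ → EType) (kval : ℕ → ℕ) (χ : ℕ → Status)
    (D : ℕ → Finset ℕ)
    (hD0 : D 0 = ∅)
    (hf : ∀ i, χ i = sf → D (i + 1) = D i)
    (hAdd0 : ∀ i, typ i = add → χ i = s0 →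
      kval i ∉ D i ∧ D (i + 1) = insert (kval i) (D i))
    (hAdd1 : ∀ i, typ i = add → χ i = s1 → kval i ∈ D i ∧ D (i + 1) = D i)
    (hRem0 : ∀ i, typ i = rem → χ i = s0 → kval i ∉ D i ∧ D (i + 1) = D i)
    (hRem1 : ∀ i, typ i = rem → χ i = s1 →
      kval i ∈ D i ∧ D (i + 1) = (D i).erase (kval i))
    (hCnt0 : ∀ i, typ i = cnt → χ i = s0 → kval i ∉ D i ∧ D (i + 1) = D i)
    (hCnt1 : ∀ i, typ i = cnt → χ i = s1 → kval i ∈ D i ∧ D (i + 1) = D i) :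
    ∃ γ : ℕ → ℕ,
      (∀ a, χ a = s1 →
        γ a < a ∧ typ (γ a) = add ∧ χ (γ a) = s0 ∧ kval (γ a) = kval a ∧
        ¬ ∃ r, typ r = rem ∧ χ r = s1 ∧ γ r = γ a ∧ γ a < r ∧ r < a) ∧
      (∀ a b, a < b → typ a = add → χ a = s0 → χ b = s0 → kval a = kval b →
        ∃ r, a < r ∧ r < b ∧ typ r = rem ∧ χ r = s1 ∧ γ r = a) := by
  have w := IsSetWitness.of_table hD0 hf hAdd0 hAdd1 hRem0 hRem1 hCnt0 hCnt1
  refine ⟨fun a => lastAdd0 typ kval χ (kval a) a, fun a ha => ?_,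
    fun a b hab hta hχa hχb hab_key => ?_⟩
  · have hmem := w.mem_of_s1 a ha
    obtain ⟨hlt, htyp, hχ, hkey⟩ := w.lastAdd0_lt_and_isAdd0 hmem
    refine ⟨hlt, htyp, hχ, hkey, ?_⟩
    rintro ⟨r, hr, hrs, heq, h₁, h₂⟩
    exact w.lastAdd0_ne_of_isRem1 hmem hr hrs h₁ h₂ heq
  · obtain ⟨r, h₁, h₂, ⟨hr, hrs, hrkey⟩, hlast⟩ :=
      w.exists_isRem1_lastAdd0_eq hab ⟨hta, hχa, rfl⟩ (hab_key ▸ w.notMem_of_s0 b hχb)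
    exact ⟨r, h₁, h₂, hr, hrs, by simpa only [hrkey] using hlast⟩
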